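/- arXiv:2005.12738 — 2 statements merged into one kernel-verified Lean document; each statement's English description precedes it below -/
import Mathlib

section
/- For ℓ ≥ 2, m ∈ ℕ, and positive reals ζ₁,…,ζ_ℓ with ζ_ℓ ≠ 1, one has Ξ_ℓ^m(ζ₁,…,ζ_ℓ) = (1/(1-ζ_ℓ))·Ξ_{ℓ-1}^m(ζ₁,…,ζ_{ℓ-1}) - (ζ_ℓ^{m+1}/(1-ζ_ℓ))·Ξ_{ℓ-1}^m(ζ₁/ζ_ℓ,…,ζ_{ℓ-1}/ζ_ℓ). -/
/-- `Ξ_ℓ^m(ζ₁,…,ζ_ℓ) = Σ_{η₁=0}^m Σ_{η₂=0}^{m-η₁} ⋯ Σ_{η_ℓ=0}^{m-η₁-⋯-η_{ℓ-1}}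
ζ₁^{η₁} ⋯ ζ_ℓ^{η_ℓ}`, i.e. the sum of `ζ₁^{η₁} ⋯ ζ_ℓ^{η_ℓ}` over all tuples of
nonnegative integers `η` with `η₁ + ⋯ + η_ℓ ≤ m`. -/
noncomputable def Xi (l m : ℕ) (ζ : Fin l → ℝ) : ℝ :=
  ∑ s ∈ Finset.range (m + 1), ∑ η ∈ Finset.Nat.antidiagonalTuple l s, ∏ i, ζ i ^ η i

/-!
Splitting off the last exponent,
`Ξ_ℓ^m(ζ) = Σ_{a ≤ m} h_a(ζ') · (1 + ζ_ℓ + ⋯ + ζ_ℓ^{m-a})`,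
where `ζ'` drops the last variable and `h_a` is the complete homogeneous sum of degree `a`.
Summing the geometric series and using homogeneity,
`ζ_ℓ^{m+1-a} h_a(ζ') = ζ_ℓ^{m+1} h_a(ζ'/ζ_ℓ)`, gives the two terms of the recursion.
-/

open Finset

namespace Finset.Nat

theorem sum_antidiagonalTuple_succ_snoc {M : Type*} [AddCommMonoid M] (k n : ℕ)
    (f : (Fin (k + 1) → ℕ) → M) :
    ∑ η ∈ antidiagonalTuple (k + 1) n, f η
      = ∑ a ∈ range (n + 1), ∑ η ∈ antidiagonalTuple k a, f (Fin.snoc η (n - a)) := by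
  have last_eq {η : Fin (k + 1) → ℕ} (hη : η ∈ antidiagonalTuple (k + 1) n) :
      ∑ i, Fin.init η i + η (Fin.last k) = n := by
    rwa [mem_antidiagonalTuple, Fin.sum_univ_castSucc] at hη
  rw [sum_sigma']
  refine sum_nbij' (fun η ↦ ⟨∑ i, Fin.init η i, Fin.init η⟩)
    (fun p ↦ Fin.snoc p.2 (n - p.1)) (fun η hη ↦ ?_) (fun p hp ↦ ?_) (fun η hη ↦ ?_)
    (fun p hp ↦ ?_) (fun η hη ↦ ?_)
  · have := last_eq hη
    simp only [mem_sigma, mem_range, mem_antidiagonalTuple, and_true]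
    omega
  · simp only [mem_sigma, mem_range, mem_antidiagonalTuple] at hp
    simp only [mem_antidiagonalTuple, Fin.sum_univ_castSucc, Fin.snoc_castSucc, Fin.snoc_last,
      hp.2]
    omega
  · rw [← last_eq hη, Nat.add_sub_cancel_left, Fin.snoc_init_self]
  · simp only [mem_sigma, mem_antidiagonalTuple] at hp
    simp only [Fin.init_snoc, hp.2]
  · rw [← last_eq hη, Nat.add_sub_cancel_left, Fin.snoc_init_self]

end Finset.Nat

noncomputable def completeHomogeneous {R : Type*} [CommSemiring R] {k : ℕ} (a : ℕ)
    (x : Fin k → R) : R :=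
  ∑ η ∈ Nat.antidiagonalTuple k a, ∏ i, x i ^ η i

theorem completeHomogeneous_succ {R : Type*} [CommSemiring R] {k : ℕ} (n : ℕ)
    (x : Fin (k + 1) → R) :
    completeHomogeneous n x
      = ∑ a ∈ range (n + 1),
          completeHomogeneous a (fun i ↦ x i.castSucc) * x (Fin.last k) ^ (n - a) := by
  simp only [completeHomogeneous, Nat.sum_antidiagonalTuple_succ_snoc, sum_mul,
    Fin.prod_univ_castSucc, Fin.snoc_castSucc, Fin.snoc_last]

theorem completeHomogeneous_div {K : Type*} [Field K] {k : ℕ} (a : ℕ) (x : Fin k → K)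
    (z : K) :
    completeHomogeneous a (fun i ↦ x i / z) = completeHomogeneous a x / z ^ a := by
  simp only [completeHomogeneous, sum_div]
  refine sum_congr rfl fun η hη ↦ ?_
  rw [Nat.mem_antidiagonalTuple] at hη
  simp only [div_pow, prod_div_distrib, prod_pow_eq_pow_sum, hη]

theorem Xi_eq_sum_completeHomogeneous (l m : ℕ) (ζ : Fin l → ℝ) :
    Xi l m ζ = ∑ a ∈ range (m + 1), completeHomogeneous a ζ := rfl

theorem Xi_succ (l m : ℕ) (ζ : Fin (l + 1) → ℝ) :
    Xi (l + 1) m ζ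
      = ∑ a ∈ range (m + 1), completeHomogeneous a (fun i ↦ ζ i.castSucc) *
          ∑ b ∈ range (m + 1 - a), ζ (Fin.last l) ^ b := by
  simp only [Xi_eq_sum_completeHomogeneous, completeHomogeneous_succ, mul_sum]
  exact sum_range_diag_flip (m + 1) fun a b ↦
    completeHomogeneous a (fun i ↦ ζ i.castSucc) * ζ (Fin.last l) ^ b

theorem Xi_recursion_general (l m : ℕ) (ζ : Fin (l + 1) → ℝ)
    (hpos : ∀ i, 0 < ζ i) (hne : ζ (Fin.last l) ≠ 1) :
    Xi (l + 1) m ζ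
      = (1 / (1 - ζ (Fin.last l))) * Xi l m (fun i => ζ i.castSucc)
        - (ζ (Fin.last l) ^ (m + 1) / (1 - ζ (Fin.last l))) *
            Xi l m (fun i => ζ i.castSucc / ζ (Fin.last l)) := by
  have hz : ζ (Fin.last l) ≠ 0 := (hpos _).ne'
  rw [Xi_succ, Xi_eq_sum_completeHomogeneous, Xi_eq_sum_completeHomogeneous, mul_sum, mul_sum,
    ← sum_sub_distrib]
  refine sum_congr rfl fun a ha ↦ ?_
  rw [geom_sum_eq hne, completeHomogeneous_div, pow_sub₀ _ hz (mem_range.mp ha).le]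
  field_simp
  ring

/-- For `ℓ ≥ 2`, `m ∈ ℕ`, and positive reals `ζ₁,…,ζ_ℓ` with `ζ_ℓ ≠ 1`, one has
`Ξ_ℓ^m(ζ₁,…,ζ_ℓ) = (1/(1-ζ_ℓ))·Ξ_{ℓ-1}^m(ζ₁,…,ζ_{ℓ-1})
  - (ζ_ℓ^{m+1}/(1-ζ_ℓ))·Ξ_{ℓ-1}^m(ζ₁/ζ_ℓ,…,ζ_{ℓ-1}/ζ_ℓ)`.
Here `ℓ = l + 1` with `l ≥ 1`. -/
theorem Xi_recursion (l m : ℕ) (hl : 1 ≤ l) (ζ : Fin (l + 1) → ℝ)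
    (hpos : ∀ i, 0 < ζ i) (hne : ζ (Fin.last l) ≠ 1) :
    Xi (l + 1) m ζ
      = (1 / (1 - ζ (Fin.last l))) * Xi l m (fun i => ζ i.castSucc)
        - (ζ (Fin.last l) ^ (m + 1) / (1 - ζ (Fin.last l))) *
            Xi l m (fun i => ζ i.castSucc / ζ (Fin.last l)) :=
  Xi_recursion_general l m ζ hpos hne
end

section
/- Let 0 < ρ < 1 and let (X_i) be the Markov chain on {1,2,3} with lower triangular substochastic transition matrix Q having diagonal ρ, subdiagonal entries q₂₁ ≠ 0, q₃₂ ≠ 0, q₃₁ arbitrary. Then for every initial distribution π with π₃ > 0 and every ℓ ∈ {1,2,3}, the quasi-ergodic limit lim_{n→∞} E_π[(1/(n+1))·#{m ≤ n : X_m = ℓ} | T > n] = 1/3, where T is the absorption time. -/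
/-!
Summing path weights over the paths of length `n` that avoid `0` gives `ℙ(T > n) = π Q^n 𝟙`,
and splitting the paths at the time `m` of a visit to `ℓ` gives
`E[#visits to ℓ; T > n] = ∑_{m ≤ n} (π Q^m)_ℓ (Q^{n-m} 𝟙)_ℓ`.
Write `Q = ρ (1 + N)` with `N` strictly lower triangular. The factors `ρ^n` cancel, `N³ = 0`
gives `(1 + N)^m = ∑_{j < 3} C(m, j) N^j`, and the convolution
`∑_{i+j=n} C(i, a) C(j, b) = C(n+1, a+b+1)` turns the numerator into
`∑_{j,k} C(n+1, j+k+1) (π N^j)_ℓ (N^k 𝟙)_ℓ`. Its leading term is `C(n+1, 3) π₃ q₂₁ q₃₂ / ρ²` for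
every `ℓ`, because the only path of `N` of length two, `3 → 2 → 1`, passes through every state
once, while the denominator grows like `C(n, 2) π₃ q₂₁ q₃₂ / ρ²`. Since
`C(n+1, 3) = (n+1) C(n, 2) / 3`, the ratio tends to `1/3`.
-/

open MeasureTheory Filter Finset Matrix Function Topology

theorem Nat.sum_antidiagonal_choose_mul_choose (a b n : ℕ) :
    ∑ ij ∈ antidiagonal n, ij.1.choose a * ij.2.choose b = (n + 1).choose (a + b + 1) := by
  induction n generalizing a with
  | zero => cases a <;> cases b <;> simp [Nat.choose_eq_zero_of_lt]
  | succ n ih =>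
    rw [Nat.sum_antidiagonal_succ]
    cases a with
    | zero =>
      have h := ih 0
      simp only [Nat.choose_zero_right, one_mul, zero_add] at h ⊢
      rw [h, Nat.choose_succ_succ' (n + 1) b, add_comm]
    | succ a =>
      simp only [Nat.choose_succ_succ' _ a, add_mul, sum_add_distrib, ih, Nat.choose_zero_succ,
        zero_mul, zero_add]
      rw [add_right_comm a 1 b, Nat.choose_succ_succ' (n + 1) (a + b + 1)]

theorem one_add_pow_eq_sum_choose_smul {A : Type*} [Semiring A] {N : A} {d : ℕ} (hN : N ^ d = 0)
    (m : ℕ) : (1 + N) ^ m = ∑ j ∈ range d, m.choose j • N ^ j := by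
  have hvanish : ∀ j, d ≤ j ∨ m < j → m.choose j • N ^ j = 0 := by
    rintro j (hj | hj)
    · rw [pow_eq_zero_of_le hj hN, smul_zero]
    · rw [Nat.choose_eq_zero_of_lt hj, zero_smul]
  have hsub : ∀ k ≤ m + 1 + d, d ≤ k ∨ m < k →
      ∑ j ∈ range k, m.choose j • N ^ j = ∑ j ∈ range (m + 1 + d), m.choose j • N ^ j :=
    fun k hk hk' => sum_subset (range_subset_range.2 hk) fun j hj hjk => by
      simp only [mem_range, not_lt] at hj hjk
      exact hvanish j (by omega)
  rw [add_comm, (Commute.one_right N).add_pow]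
  simp only [one_pow, mul_one, ← nsmul_eq_mul']
  rw [hsub (m + 1) (by omega) (by omega), hsub d (by omega) (by omega)]

theorem tendsto_choose_three_ratio {α₀ α₁ β₀ β₁ β : ℝ} (hβ : β ≠ 0) :
    Tendsto (fun n : ℕ => (α₀ * (n + 1) + α₁ * (n + 1).choose 2 + β * (n + 1).choose 3) / (n + 1)
      / (β₀ + β₁ * n + β * n.choose 2)) atTop (𝓝 (1 / 3)) := by
  set g : ℝ → ℝ := fun x =>
    (α₀ * x ^ 2 + α₁ / 2 * x + β / 6 * (1 - x)) / (β₀ * x ^ 2 + β₁ * x + β / 2 * (1 - x))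
  have hg : ContinuousAt g 0 := by
    fun_prop (disch := simpa using hβ)
  have hg0 : g 0 = 1 / 3 := by
    simp only [g, ne_eq, OfNat.ofNat_ne_zero, not_false_eq_true, zero_pow, mul_zero, zero_add,
      add_zero, sub_zero, mul_one]
    field_simp
    norm_num
  rw [← hg0]
  refine (hg.tendsto.comp tendsto_one_div_atTop_nhds_zero_nat).congr' ?_
  filter_upwards [eventually_ge_atTop 1] with n hn
  have h3 := congrArg (Nat.cast : ℕ → ℝ) (Nat.add_one_mul_choose_eq n 2)
  push_cast [Nat.cast_choose_two] at h3 ⊢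
  rw [show ((n + 1).choose 3 : ℝ) = (n + 1) * (n * (n - 1) / 2) / 3 by rw [h3]; ring]
  simp only [Function.comp, g]
  field_simp
  ring

namespace Matrix

variable {S R : Type*} [Fintype S] [DecidableEq S] [CommSemiring R] {N : Matrix S S R} {d : ℕ}

theorem vecMul_one_add_pow (hN : N ^ d = 0) (π : S → R) (m : ℕ) :
    π ᵥ* (1 + N) ^ m = ∑ j ∈ range d, m.choose j • π ᵥ* N ^ j := by
  rw [one_add_pow_eq_sum_choose_smul hN, vecMul_sum]
  simp only [vecMul_smul]

theorem one_add_pow_mulVec (hN : N ^ d = 0) (f : S → R) (m : ℕ) :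
    (1 + N) ^ m *ᵥ f = ∑ k ∈ range d, m.choose k • N ^ k *ᵥ f := by
  rw [one_add_pow_eq_sum_choose_smul hN, sum_mulVec]
  simp only [smul_mulVec]

theorem sum_vecMul_one_add_pow_mul_mulVec (hN : N ^ d = 0) (π : S → R) (ℓ : S) (n : ℕ) :
    ∑ m ∈ range (n + 1), (π ᵥ* (1 + N) ^ m) ℓ * ((1 + N) ^ (n - m) *ᵥ 1) ℓ =
      ∑ j ∈ range d, ∑ k ∈ range d,
        (n + 1).choose (j + k + 1) • ((π ᵥ* N ^ j) ℓ * (N ^ k *ᵥ 1) ℓ) := by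
  rw [← Nat.sum_antidiagonal_eq_sum_range_succ
    (fun m m' => (π ᵥ* (1 + N) ^ m) ℓ * ((1 + N) ^ m' *ᵥ 1) ℓ)]
  simp only [vecMul_one_add_pow hN, one_add_pow_mulVec hN, Finset.sum_apply, Pi.smul_apply,
    sum_mul_sum, smul_mul_smul_comm, ← Nat.sum_antidiagonal_choose_mul_choose, sum_smul]
  rw [sum_comm]
  exact sum_congr rfl fun j _ => sum_comm

end Matrix

namespace MarkovPath

variable {S R : Type*} [CommSemiring R]

def pathWeight (π : S → R) (Q : Matrix S S R) (n : ℕ) (x : Fin (n + 1) → S) : R :=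
  π (x 0) * ∏ m : Fin n, Q (x m.castSucc) (x m.succ)

def visits [DecidableEq S] {k : ℕ} (ℓ : S) (x : Fin k → S) : ℕ := #{m | x m = ℓ}

section PathSums

variable (π : S → R) (Q : Matrix S S R)

theorem pathWeight_snoc {n : ℕ} (x : Fin (n + 1) → S) (j : S) :
    pathWeight π Q (n + 1) (Fin.snoc x j) = pathWeight π Q n x * Q (x (Fin.last n)) j := by
  simp only [pathWeight, Fin.prod_univ_castSucc, ← Fin.castSucc_zero, Fin.snoc_castSucc,
    Fin.succ_castSucc, Fin.succ_last, Fin.snoc_last, mul_assoc]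

theorem pathWeight_smul {n : ℕ} (c : R) (x : Fin (n + 1) → S) :
    pathWeight π (c • Q) n x = c ^ n * pathWeight π Q n x := by
  simp only [pathWeight, Matrix.smul_apply, smul_eq_mul, prod_mul_distrib, prod_const,
    card_univ, Fintype.card_fin]
  ring

theorem sum_pathWeight_succ [Fintype S] {n : ℕ} (g : (Fin (n + 1) → S) → R) (f : S → R) :
    ∑ x : Fin (n + 2) → S, g (Fin.init x) * pathWeight π Q (n + 1) x * f (x (Fin.last _)) =
      ∑ x : Fin (n + 1) → S, g x * pathWeight π Q n x * (Q *ᵥ f) (x (Fin.last n)) := by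
  rw [← (Fin.snocEquiv fun _ => S).sum_comp, Fintype.sum_prod_type_right]
  refine sum_congr rfl fun x _ => ?_
  simp [Fin.snocEquiv, pathWeight_snoc, mulVec, dotProduct, mul_sum, mul_assoc]

theorem sum_pathWeight_mul [Fintype S] [DecidableEq S] (f : S → R) (n : ℕ) :
    ∑ x : Fin (n + 1) → S, pathWeight π Q n x * f (x (Fin.last n)) = (π ᵥ* Q ^ n) ⬝ᵥ f := by
  induction n generalizing f with
  | zero =>
    rw [← (Equiv.funUnique (Fin 1) S).symm.sum_comp]
    simp [pathWeight, dotProduct]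
  | succ n ih =>
    have step := sum_pathWeight_succ π Q (n := n) (fun _ => 1) f
    simp only [one_mul] at step
    rw [step, ih, pow_succ, ← vecMul_vecMul, dotProduct_mulVec]

theorem sum_ite_pathWeight_mul [Fintype S] [DecidableEq S] (ℓ : S) (f : S → R) {m n : ℕ}
    (hmn : m ≤ n) :
    ∑ x : Fin (n + 1) → S,
        (if x ⟨m, by omega⟩ = ℓ then 1 else 0) * pathWeight π Q n x * f (x (Fin.last n)) =
      (π ᵥ* Q ^ m) ℓ * (Q ^ (n - m) *ᵥ f) ℓ := by
  induction n, hmn using Nat.le_induction generalizing f with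
  | base =>
    rw [Nat.sub_self, pow_zero, one_mulVec, ← dotProduct_single, ← sum_pathWeight_mul]
    refine sum_congr rfl fun x _ => ?_
    rw [show (⟨m, _⟩ : Fin (m + 1)) = Fin.last m from rfl]
    split_ifs with h <;> simp [h]
  | succ n hmn ih =>
    refine (sum_pathWeight_succ π Q (n := n)
      (fun x => if x ⟨m, by omega⟩ = ℓ then 1 else 0) f).trans ?_
    rw [ih, Nat.sub_add_comm hmn, pow_succ, ← mulVec_mulVec]

theorem sum_visits_mul_pathWeight [Fintype S] [DecidableEq S] (ℓ : S) (n : ℕ) :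
    ∑ x : Fin (n + 1) → S, (visits ℓ x : R) * pathWeight π Q n x =
      ∑ m ∈ range (n + 1), (π ᵥ* Q ^ m) ℓ * (Q ^ (n - m) *ᵥ 1) ℓ := by
  rw [← Fin.sum_univ_eq_sum_range (fun m => (π ᵥ* Q ^ m) ℓ * (Q ^ (n - m) *ᵥ 1) ℓ)]
  simp_rw [← fun m : Fin (n + 1) => sum_ite_pathWeight_mul π Q ℓ 1 (Nat.le_of_lt_succ m.2)]
  rw [sum_comm]
  simp only [visits, card_filter, Nat.cast_sum, Nat.cast_ite, Nat.cast_one, Nat.cast_zero,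
    sum_mul, Pi.one_apply, mul_one, Fin.eta]

end PathSums

section OccupationRatio

variable [Fintype S] [DecidableEq S] (π : S → ℝ) (Q : Matrix S S ℝ) (ℓ : S)

noncomputable def occupationRatio (n : ℕ) : ℝ :=
  (∑ x : Fin (n + 1) → S, (visits ℓ x : ℝ) * pathWeight π Q n x) / (n + 1) /
    ∑ x : Fin (n + 1) → S, pathWeight π Q n x

theorem occupationRatio_eq (n : ℕ) :
    occupationRatio π Q ℓ n =
      (∑ m ∈ range (n + 1), (π ᵥ* Q ^ m) ℓ * (Q ^ (n - m) *ᵥ 1) ℓ) / (n + 1) /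
        ((π ᵥ* Q ^ n) ⬝ᵥ 1) := by
  rw [occupationRatio, sum_visits_mul_pathWeight, ← sum_pathWeight_mul π Q 1]
  simp only [Pi.one_apply, mul_one]

theorem occupationRatio_smul {c : ℝ} (hc : c ≠ 0) (n : ℕ) :
    occupationRatio π (c • Q) ℓ n = occupationRatio π Q ℓ n := by
  simp only [occupationRatio, pathWeight_smul, mul_left_comm _ (c ^ n), ← mul_sum]
  rw [mul_div_assoc, mul_div_mul_left _ _ (pow_ne_zero n hc)]

end OccupationRatio

section Cylinder

variable {Ω : Type*} {X : ℕ → Ω → ℕ} {n d : ℕ}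

def pathCylinder (X : ℕ → Ω → ℕ) (x : Fin (n + 1) → Fin d) : Set Ω :=
  {ω | ∀ m : Fin (n + 1), X m ω = x m + 1}

theorem measurableSet_pathCylinder [MeasurableSpace Ω] (hX : ∀ m, Measurable (X m))
    (x : Fin (n + 1) → Fin d) : MeasurableSet (pathCylinder X x) := by
  rw [pathCylinder, Set.ofPred_forall]
  exact MeasurableSet.iInter fun m => hX m (measurableSet_singleton _)

theorem pairwise_disjoint_pathCylinder :
    Pairwise (Disjoint on (pathCylinder X : (Fin (n + 1) → Fin d) → Set Ω)) :=
  fun x y hxy => Set.disjoint_left.2 fun ω hx hy =>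
    hxy <| funext fun m => Fin.ext <| by have := hx m; have := hy m; omega

theorem iUnion_pathCylinder (hX : ∀ m ω, X m ω ≤ d) :
    ⋃ x : Fin (n + 1) → Fin d, pathCylinder X x = {ω | ∀ m ≤ n, X m ω ≠ 0} := by
  ext ω
  simp only [Set.mem_iUnion, pathCylinder, Set.mem_ofPred_eq]
  constructor
  · rintro ⟨x, hx⟩ m hm
    have := hx ⟨m, by omega⟩
    simp only at this
    omega
  · intro hω
    refine ⟨fun m => ⟨X m ω - 1, ?_⟩, fun m => ?_⟩
    · have := hX m ω; have := hω m m.is_le; omega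
    · have := hω m m.is_le; simp only; omega

theorem card_filter_eq_visits {ω : Ω} {x : Fin (n + 1) → Fin d} (hω : ω ∈ pathCylinder X x)
    (ℓ : Fin d) : #{m ∈ range (n + 1) | X m ω = ℓ + 1} = visits ℓ x := by
  rw [visits, card_filter, card_filter, ← Fin.sum_univ_eq_sum_range]
  refine sum_congr rfl fun m _ => ?_
  simp only [hω m, add_left_inj, Fin.val_inj]

theorem integral_survival_div_eq_occupationRatio [MeasurableSpace Ω] {ℙ : Measure Ω}
    [IsFiniteMeasure ℙ] (hmeas : ∀ m, Measurable (X m)) (hX : ∀ m ω, X m ω ≤ d)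
    (π : Fin d → ℝ) (Q : Matrix (Fin d) (Fin d) ℝ)
    (hMarkov : ∀ x : Fin (n + 1) → Fin d, ℙ.real (pathCylinder X x) = pathWeight π Q n x)
    (ℓ : Fin d) :
    (∫ ω in {ω | ∀ m ≤ n, X m ω ≠ 0},
        (#{m ∈ range (n + 1) | X m ω = ℓ + 1} : ℝ) / (n + 1) ∂ℙ) /
      (ℙ {ω | ∀ m ≤ n, X m ω ≠ 0}).toReal = occupationRatio π Q ℓ n := by
  have hconst : ∀ x : Fin (n + 1) → Fin d, Set.EqOn
      (fun ω => (#{m ∈ range (n + 1) | X m ω = ℓ + 1} : ℝ) / (n + 1))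
      (fun _ => (visits ℓ x : ℝ) / (n + 1)) (pathCylinder X x) :=
    fun x ω hω => by simp only [card_filter_eq_visits hω]
  have hcyl : ∀ x : Fin (n + 1) → Fin d,
      ∫ ω in pathCylinder X x, (#{m ∈ range (n + 1) | X m ω = ℓ + 1} : ℝ) / (n + 1) ∂ℙ =
        visits ℓ x * pathWeight π Q n x / (n + 1) := fun x => by
    rw [setIntegral_congr_fun (measurableSet_pathCylinder hmeas x) (hconst x), setIntegral_const,
      hMarkov, smul_eq_mul]
    ring
  rw [← measureReal_def, ← iUnion_pathCylinder hX,
    integral_iUnion_fintype (measurableSet_pathCylinder hmeas) pairwise_disjoint_pathCylinder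
      fun x => IntegrableOn.congr_fun integrableOn_const (hconst x).symm
        (measurableSet_pathCylinder hmeas x),
    measureReal_iUnion_fintype pairwise_disjoint_pathCylinder (measurableSet_pathCylinder hmeas)]
  simp only [hcyl, hMarkov, ← sum_div, occupationRatio]

end Cylinder

end MarkovPath

open MarkovPath

section ThreeStates

variable {R : Type*} [CommRing R]

def strictLowerTriangular₃ (a b c : R) : Matrix (Fin 3) (Fin 3) R :=
  !![0, 0, 0; a, 0, 0; c, b, 0]

variable (a b c : R)

theorem strictLowerTriangular₃_sq :
    strictLowerTriangular₃ a b c ^ 2 = !![0, 0, 0; 0, 0, 0; b * a, 0, 0] := by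
  ext i j
  fin_cases i <;> fin_cases j <;> simp [strictLowerTriangular₃, sq, mul_apply, Fin.sum_univ_three]

theorem strictLowerTriangular₃_pow_three : strictLowerTriangular₃ a b c ^ 3 = 0 := by
  rw [pow_succ, strictLowerTriangular₃_sq]
  ext i j
  fin_cases i <;> fin_cases j <;> simp [strictLowerTriangular₃, mul_apply, Fin.sum_univ_three]

theorem vecMul_strictLowerTriangular₃ (π : Fin 3 → R) :
    π ᵥ* strictLowerTriangular₃ a b c = ![π 1 * a + π 2 * c, π 2 * b, 0] := by
  ext i
  fin_cases i <;> simp [strictLowerTriangular₃, vecMul, dotProduct, Fin.sum_univ_three]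

theorem vecMul_strictLowerTriangular₃_sq (π : Fin 3 → R) :
    π ᵥ* strictLowerTriangular₃ a b c ^ 2 = ![π 2 * b * a, 0, 0] := by
  ext i
  fin_cases i <;>
    simp [strictLowerTriangular₃_sq, vecMul, dotProduct, Fin.sum_univ_three, mul_assoc]

theorem strictLowerTriangular₃_mulVec_one : strictLowerTriangular₃ a b c *ᵥ 1 = ![0, a, c + b] := by
  ext i
  fin_cases i <;> simp [strictLowerTriangular₃, mulVec, dotProduct, Fin.sum_univ_three]

theorem strictLowerTriangular₃_sq_mulVec_one :
    strictLowerTriangular₃ a b c ^ 2 *ᵥ 1 = ![0, 0, b * a] := by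
  ext i
  fin_cases i <;> simp [strictLowerTriangular₃_sq, mulVec, dotProduct, Fin.sum_univ_three]

theorem exists_occupation_sum_eq (π : Fin 3 → R) (ℓ : Fin 3) :
    ∃ α₀ α₁ : R, ∀ n : ℕ,
      ∑ j ∈ range 3, ∑ k ∈ range 3, (n + 1).choose (j + k + 1) •
        ((π ᵥ* strictLowerTriangular₃ a b c ^ j) ℓ * (strictLowerTriangular₃ a b c ^ k *ᵥ 1) ℓ) =
        α₀ * (n + 1) + α₁ * (n + 1).choose 2 + π 2 * a * b * (n + 1).choose 3 := by
  refine ⟨π ℓ, ![π 1 * a + π 2 * c, π 1 * a + π 2 * b, π 2 * (b + c)] ℓ, fun n => ?_⟩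
  simp only [sum_range_succ, sum_range_zero, zero_add, pow_zero, pow_one, vecMul_one, one_mulVec,
    vecMul_strictLowerTriangular₃, vecMul_strictLowerTriangular₃_sq,
    strictLowerTriangular₃_mulVec_one, strictLowerTriangular₃_sq_mulVec_one, nsmul_eq_mul,
    Nat.reduceAdd, Nat.choose_one_right, Pi.one_apply, mul_one, Nat.cast_add, Nat.cast_one]
  fin_cases ℓ <;>
    simp only [Fin.zero_eta, Fin.mk_one, Fin.reduceFinMk, Fin.isValue, cons_val_zero, cons_val_one,
      Matrix.cons_val, mul_zero, zero_mul, add_zero] <;>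
    ring

theorem vecMul_one_add_strictLowerTriangular₃_pow_dotProduct_one (π : Fin 3 → R) (n : ℕ) :
    (π ᵥ* (1 + strictLowerTriangular₃ a b c) ^ n) ⬝ᵥ 1 =
      ∑ i, π i + (π 1 * a + π 2 * (b + c)) * n + π 2 * a * b * n.choose 2 := by
  rw [vecMul_one_add_pow (strictLowerTriangular₃_pow_three a b c), sum_dotProduct]
  simp only [sum_range_succ, sum_range_zero, zero_add, pow_zero, pow_one, vecMul_one,
    vecMul_strictLowerTriangular₃, vecMul_strictLowerTriangular₃_sq, dotProduct_one,
    Fin.sum_univ_three, nsmul_eq_mul, Pi.mul_apply, Pi.natCast_apply, Nat.choose_zero_right,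
    Nat.choose_one_right, Nat.cast_one, one_mul, Fin.isValue, cons_val_zero, cons_val_one,
    cons_val_two, tail_cons, head_cons, mul_zero, add_zero]
  ring

end ThreeStates

theorem tendsto_occupationRatio_one_add_strictLowerTriangular₃ {a b : ℝ} (c : ℝ)
    {π : Fin 3 → ℝ} (ha : a ≠ 0) (hb : b ≠ 0) (hπ : π 2 ≠ 0) (ℓ : Fin 3) :
    Tendsto (occupationRatio π (1 + strictLowerTriangular₃ a b c) ℓ) atTop (𝓝 (1 / 3)) := by
  obtain ⟨α₀, α₁, hsum⟩ := exists_occupation_sum_eq a b c π ℓ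
  refine (tendsto_choose_three_ratio (α₀ := α₀) (α₁ := α₁) (β₀ := ∑ i, π i)
    (β₁ := π 1 * a + π 2 * (b + c)) (mul_ne_zero (mul_ne_zero hπ ha) hb)).congr fun n => ?_
  rw [occupationRatio_eq,
    sum_vecMul_one_add_pow_mul_mulVec (strictLowerTriangular₃_pow_three a b c), hsum,
    vecMul_one_add_strictLowerTriangular₃_pow_dotProduct_one]


theorem quasi_ergodic_limit_three_states_general
    {Ω : Type*} [MeasurableSpace Ω] (ℙ : Measure Ω) [IsProbabilityMeasure ℙ]
    (ρ q₂₁ q₃₁ q₃₂ : ℝ)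
    (hρ0 : 0 < ρ) (h21 : q₂₁ ≠ 0) (h32 : q₃₂ ≠ 0)
    (Q : Matrix (Fin 3) (Fin 3) ℝ)
    (hQ : Q = !![ρ, 0, 0; q₂₁, ρ, 0; q₃₁, q₃₂, ρ])
    (π : Fin 3 → ℝ)
    (hπ3 : 0 < π 2)
    (X : ℕ → Ω → ℕ) (hmeas : ∀ m, Measurable (X m))
    (hstate : ∀ m ω, X m ω ≤ 3)
    (hMarkov : ∀ (n : ℕ) (x : Fin (n + 1) → Fin 3),
      (ℙ {ω | ∀ m : Fin (n + 1), X m ω = (x m : ℕ) + 1}).toReal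
        = π (x 0) * ∏ m : Fin n, Q (x m.castSucc) (x m.succ))
    (ℓ : Fin 3) :
    Tendsto (fun n : ℕ =>
        (∫ ω in {ω | ∀ m ≤ n, X m ω ≠ 0},
            (((Finset.range (n + 1)).filter (fun m => X m ω = (ℓ : ℕ) + 1)).card : ℝ)
              / (n + 1) ∂ℙ)
          / (ℙ {ω | ∀ m ≤ n, X m ω ≠ 0}).toReal)
      atTop (nhds (1 / 3)) := by
  have hρ : ρ ≠ 0 := hρ0.ne'
  have hQ_smul : Q = ρ • (1 + strictLowerTriangular₃ (q₂₁ / ρ) (q₃₂ / ρ) (q₃₁ / ρ)) := by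
    subst hQ
    ext i j
    fin_cases i <;> fin_cases j <;> simp [strictLowerTriangular₃, mul_div_cancel₀ _ hρ]
  refine (tendsto_occupationRatio_one_add_strictLowerTriangular₃ (q₃₁ / ρ) (div_ne_zero h21 hρ)
    (div_ne_zero h32 hρ) hπ3.ne' ℓ).congr fun n => ?_
  rw [integral_survival_div_eq_occupationRatio hmeas hstate π Q (hMarkov n), hQ_smul,
    occupationRatio_smul _ _ _ hρ]

/-- Let `0 < ρ < 1` and let `(X_i)` be the Markov chain on `{1,2,3}` (with
absorbing state `0`) with lower triangular substochastic transition matrix `Q`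
having diagonal `ρ` and subdiagonal entries `q₂₁ ≠ 0`, `q₃₂ ≠ 0`, `q₃₁` arbitrary.
Then for every initial distribution `π` with `π₃ > 0` and every `ℓ ∈ {1,2,3}`, the
quasi-ergodic limit
`lim_{n→∞} E_π[(1/(n+1))·#{m ≤ n : X_m = ℓ} | T > n] = 1/3`,
where `{T > n} = {∀ m ≤ n, X_m ≠ 0}` is the non-absorption event.  State
`ℓ ∈ {1,2,3}` is encoded as `(ℓ : Fin 3)` with numerical value `(ℓ : ℕ) + 1`. -/
theorem quasi_ergodic_limit_three_states
    {Ω : Type*} [MeasurableSpace Ω] (ℙ : Measure Ω) [IsProbabilityMeasure ℙ]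
    (ρ q₂₁ q₃₁ q₃₂ : ℝ)
    (hρ0 : 0 < ρ) (hρ1 : ρ < 1) (h21 : q₂₁ ≠ 0) (h32 : q₃₂ ≠ 0)
    (h21nonneg : 0 ≤ q₂₁) (h31nonneg : 0 ≤ q₃₁) (h32nonneg : 0 ≤ q₃₂)
    (hrow2 : q₂₁ + ρ ≤ 1) (hrow3 : q₃₁ + q₃₂ + ρ ≤ 1)
    (Q : Matrix (Fin 3) (Fin 3) ℝ)
    (hQ : Q = !![ρ, 0, 0; q₂₁, ρ, 0; q₃₁, q₃₂, ρ])
    (π : Fin 3 → ℝ) (hπnonneg : ∀ i, 0 ≤ π i) (hπsum : ∑ i, π i = 1)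
    (hπ3 : 0 < π 2)
    (X : ℕ → Ω → ℕ) (hmeas : ∀ m, Measurable (X m))
    (hstate : ∀ m ω, X m ω ≤ 3)
    (hMarkov : ∀ (n : ℕ) (x : Fin (n + 1) → Fin 3),
      (ℙ {ω | ∀ m : Fin (n + 1), X m ω = (x m : ℕ) + 1}).toReal
        = π (x 0) * ∏ m : Fin n, Q (x m.castSucc) (x m.succ))
    (ℓ : Fin 3) :
    Tendsto (fun n : ℕ =>
        (∫ ω in {ω | ∀ m ≤ n, X m ω ≠ 0},
            (((Finset.range (n + 1)).filter (fun m => X m ω = (ℓ : ℕ) + 1)).card : ℝ)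
              / (n + 1) ∂ℙ)
          / (ℙ {ω | ∀ m ≤ n, X m ω ≠ 0}).toReal)
      atTop (nhds (1 / 3)) :=
  quasi_ergodic_limit_three_states_general ℙ ρ q₂₁ q₃₁ q₃₂ hρ0 h21 h32 Q hQ π hπ3 X hmeas hstate
    hMarkov ℓ
end
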